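/- Let (G,T) be a graft, let X ⊆ V(G) be an extreme set, and let (Ĝ, T̂) be the rootlization of (G,T) by the mount X, the root r, and the attachment s. Then a set F̂ ⊆ E(Ĝ) is a minimum join of (Ĝ, T̂) if and only if F̂ = F ∪ {rs} for some minimum join F of (G,T). -/

import Mathlib

open scoped Classical

variable {V : Type*}

/-- The `F`-weight of a walk: number of edges outside `F` minus number of edges in `F`. -/
noncomputable def walkWeight {G : SimpleGraph V} (F : Set (Sym2 V)) {x y : V}
    (p : G.Walk x y) : ℤ :=
  ((p.edges.filter fun e => e ∉ F).length : ℤ) -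
    ((p.edges.filter fun e => e ∈ F).length : ℤ)

/-- The `F`-distance between `x` and `y`: the minimum `F`-weight of a path between them. -/
noncomputable def distF (G : SimpleGraph V) (F : Set (Sym2 V)) (x y : V) : ℤ :=
  sInf {w : ℤ | ∃ p : G.Walk x y, p.IsPath ∧ walkWeight F p = w}

/-- `F` is a join of the graft `(G, T)`. -/
def IsJoin (G : SimpleGraph V) (T : Set V) (F : Set (Sym2 V)) : Prop :=
  F ⊆ G.edgeSet ∧ ∀ v : V, v ∈ T ↔ Odd {e ∈ F | v ∈ e}.ncard

/-- `F` is a minimum join of the graft `(G, T)`. -/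
def IsMinJoin (G : SimpleGraph V) (T : Set V) (F : Set (Sym2 V)) : Prop :=
  IsJoin G T F ∧ ∀ F' : Set (Sym2 V), IsJoin G T F' → F.ncard ≤ F'.ncard

/-- `(G, T)` is a graft: every connected component contains an even number of vertices of `T`. -/
def IsGraft (G : SimpleGraph V) (T : Set V) : Prop :=
  ∀ v : V, Even {u | u ∈ T ∧ G.Reachable v u}.ncard

/-- `X` is an extreme set: `d_F(x, y) ≥ 0` for all `x, y ∈ X`. -/
def IsExtremeSet (G : SimpleGraph V) (F : Set (Sym2 V)) (X : Set V) : Prop :=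
  ∀ x ∈ X, ∀ y ∈ X, 0 ≤ distF G F x y

/-- `G` is bipartite with vertex set `Vset` and color classes `A`, `B`. -/
def IsBipartitionOn (G : SimpleGraph V) (Vset A B : Set V) : Prop :=
  A ∪ B = Vset ∧ Disjoint A B ∧
    ∀ v w : V, G.Adj v w → (v ∈ A ∧ w ∈ B) ∨ (v ∈ B ∧ w ∈ A)

/-- `X` is a maximal bipartitic extreme set with respect to color classes `A`, `B`. -/
def MaxBipExtreme (G : SimpleGraph V) (F : Set (Sym2 V)) (A B X : Set V) : Prop :=
  IsExtremeSet G F X ∧ (X ⊆ A ∨ X ⊆ B) ∧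
    ∀ X' : Set V, IsExtremeSet G F X' → (X' ⊆ A ∨ X' ⊆ B) → X ⊆ X' → X' = X

/-- `D_X`: the vertices of `Vset ∖ X` at negative `F`-distance from `X`. -/
def Dset (G : SimpleGraph V) (F : Set (Sym2 V)) (Vset X : Set V) : Set V :=
  {y | y ∈ Vset ∧ y ∉ X ∧ ∃ x ∈ X, distF G F x y < 0}

/-- `C_X = Vset ∖ X ∖ D_X`. -/
def Cset (G : SimpleGraph V) (F : Set (Sym2 V)) (Vset X : Set V) : Set V :=
  (Vset \ X) \ Dset G F Vset X

/-- `min_{x ∈ X} d_F(x, y)`. -/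
noncomputable def minDistX (G : SimpleGraph V) (F : Set (Sym2 V)) (X : Set V) (y : V) : ℤ :=
  sInf {d : ℤ | ∃ x ∈ X, distF G F x y = d}

/-- The graph `G − S` obtained by deleting the vertices of `S`. -/
def gDelete (G : SimpleGraph V) (S : Set V) : SimpleGraph V where
  Adj v w := G.Adj v w ∧ v ∉ S ∧ w ∉ S
  symm := ⟨fun v w ⟨h, hv, hw⟩ => ⟨h.symm, hw, hv⟩⟩
  loopless := ⟨fun v h => G.loopless.irrefl v h.1⟩

/-- The subgraph of `G` induced by `S`. -/
def gRestrict (G : SimpleGraph V) (S : Set V) : SimpleGraph V where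
  Adj v w := G.Adj v w ∧ v ∈ S ∧ w ∈ S
  symm := ⟨fun v w ⟨h, hv, hw⟩ => ⟨h.symm, hw, hv⟩⟩
  loopless := ⟨fun v h => G.loopless.irrefl v h.1⟩

/-- `C` is (the vertex set of) a connected component of `G − X`. -/
def IsCompOf (G : SimpleGraph V) (X C : Set V) : Prop :=
  ∃ v, v ∉ X ∧ C = {u | (gDelete G X).Reachable v u}

/-- `δ_G(C)`: the edges of `G` with exactly one end in `C`. -/
def edgeBoundary (G : SimpleGraph V) (C : Set V) : Set (Sym2 V) :=
  {e | e ∈ G.edgeSet ∧ ∃ u v : V, e = s(u, v) ∧ u ∈ C ∧ v ∉ C}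

/-- `X` is an `F`-combic set of the graft `(G, T)`. -/
def IsCombic (G : SimpleGraph V) (T : Set V) (F : Set (Sym2 V)) (X : Set V) : Prop :=
  (∀ u v : V, s(u, v) ∈ F → ¬(u ∈ X ∧ v ∈ X)) ∧
  (∀ C : Set V, IsCompOf G X C → Odd (C ∩ T).ncard →
      (edgeBoundary G C ∩ F).ncard = 1) ∧
  (∀ C : Set V, IsCompOf G X C → Even (C ∩ T).ncard →
      edgeBoundary G C ∩ F = ∅)

/-- The rootlization of `G` by the mount `X`, root `r` and attachment `s`. -/
def rootlize (G : SimpleGraph V) (X : Set V) (r s : V) : SimpleGraph V :=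
  SimpleGraph.fromRel fun v w => G.Adj v w ∨ (v = r ∧ w = s) ∨ (v = s ∧ w ∈ X)

/-- The initial component of `r`: the connected component of `r` in the subgraph
induced by the vertices at nonpositive `F`-distance from `r`. -/
def initComp (G : SimpleGraph V) (F : Set (Sym2 V)) (r : V) : Set V :=
  {x | (gRestrict G {y | distF G F r y ≤ 0}).Reachable r x}

/-! Every join `F̂` of the rootlization contains `rs`, the only edge at `r`, and splits as
`F ∪ {rs} ∪ {sx | x ∈ S}` with `S ⊆ X` and `F` a join of `(G, T ∆ S)`. If `F₀` is a minimum join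
of `(G, T)`, then `F ∆ F₀` is a join of `S`; it is peeled into paths joining pairs of vertices of
`S`, each of nonnegative `F₀`-weight because `X` is extreme, and an even remainder `D`, of
nonnegative weight because `F₀ ∆ D` is again a join of `T`. Hence `|F| ≥ |F₀|`, so
`|F̂| ≥ |F₀| + 1 + |S|`, with equality exactly when `S = ∅` and `F` is a minimum join. -/

open scoped symmDiff

def oddVertices (D : Set (Sym2 V)) : Set V :=
  {v | Odd {e ∈ D | v ∈ e}.ncard}

theorem isJoin_iff {G : SimpleGraph V} {T : Set V} {F : Set (Sym2 V)} :
    IsJoin G T F ↔ F ⊆ G.edgeSet ∧ oddVertices F = T := by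
  rw [IsJoin, Set.ext_iff]
  simp only [oddVertices, Set.mem_ofPred_eq, iff_comm]

theorem Set.odd_ncard_symmDiff_iff {α : Type*} {A B : Set α} (hA : A.Finite) (hB : B.Finite) :
    Odd (A ∆ B).ncard ↔ ¬(Odd A.ncard ↔ Odd B.ncard) := by
  have hAB := Set.ncard_inter_add_ncard_sdiff_eq_ncard A B hA
  have hBA := Set.ncard_inter_add_ncard_sdiff_eq_ncard B A hB
  rw [Set.inter_comm] at hBA
  rw [Set.symmDiff_def, Set.ncard_union_eq disjoint_sdiff_sdiff hA.sdiff hB.sdiff]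
  simp only [Nat.odd_iff]
  omega

theorem Set.symmDiff_eq_union {α : Type*} {A B : Set α} (h : Disjoint A B) : A ∆ B = A ∪ B :=
  h.symmDiff_eq_sup

theorem oddVertices_symmDiff {A B : Set (Sym2 V)} (hA : A.Finite) (hB : B.Finite) :
    oddVertices (A ∆ B) = oddVertices A ∆ oddVertices B := by
  ext v
  have hsep : {e ∈ A ∆ B | v ∈ e} = {e ∈ A | v ∈ e} ∆ {e ∈ B | v ∈ e} := by
    ext e
    simp only [Set.mem_symmDiff, Set.mem_ofPred_eq]
    tauto
  simp only [oddVertices, Set.mem_ofPred_eq]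
  rw [hsep, Set.odd_ncard_symmDiff_iff (hA.sep _) (hB.sep _), Set.mem_symmDiff]
  simp only [Set.mem_ofPred_eq]
  tauto

theorem oddVertices_singleton {a b : V} (hab : a ≠ b) :
    oddVertices {s(a, b)} = {a} ∆ {b} := by
  ext v
  by_cases hv : v ∈ s(a, b)
  · have : {e ∈ ({s(a, b)} : Set (Sym2 V)) | v ∈ e} = {s(a, b)} := by
      ext e; simp only [Set.mem_ofPred_eq, Set.mem_singleton_iff]
      exact ⟨And.left, fun h => ⟨h, h ▸ hv⟩⟩
    simp only [oddVertices, Set.mem_ofPred_eq, this, Set.ncard_singleton, odd_one, true_iff]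
    rcases Sym2.mem_iff.mp hv with rfl | rfl <;> simp [Set.mem_symmDiff, hab, hab.symm]
  · have : {e ∈ ({s(a, b)} : Set (Sym2 V)) | v ∈ e} = ∅ := by
      ext e; simp only [Set.mem_ofPred_eq, Set.mem_singleton_iff, Set.mem_empty_iff_false,
        iff_false, not_and]
      rintro rfl; exact hv
    simp only [oddVertices, Set.mem_ofPred_eq, this, Set.ncard_empty]
    simp_all [Set.mem_symmDiff]

theorem oddVertices_edges_of_isTrail {G : SimpleGraph V} {u v : V} (p : G.Walk u v)
    (hp : p.IsTrail) : oddVertices {e | e ∈ p.edges} = {u} ∆ {v} := by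
  induction p with
  | nil => simp [oddVertices]
  | @cons a c b h q ih =>
    rw [SimpleGraph.Walk.isTrail_cons] at hp
    have hdisj : Disjoint ({s(a, c)} : Set (Sym2 V)) {e | e ∈ q.edges} :=
      Set.disjoint_singleton_left.mpr hp.2
    have hedges : {e | e ∈ (SimpleGraph.Walk.cons h q).edges} =
        {s(a, c)} ∆ {e | e ∈ q.edges} := by
      rw [Set.symmDiff_eq_union hdisj]
      ext e; simp
    rw [hedges, oddVertices_symmDiff (Set.finite_singleton _) q.edges.finite_toSet,
      oddVertices_singleton h.ne, ih hp.1, symmDiff_assoc, symmDiff_symmDiff_cancel_left]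

theorem exists_mem_of_mem_oddVertices {D : Set (Sym2 V)} {v : V} (hv : v ∈ oddVertices D) :
    ∃ e ∈ D, v ∈ e :=
  Set.nonempty_of_ncard_ne_zero (Odd.pos hv).ne'

theorem SimpleGraph.mem_support_of_mem_edgeSet {G : SimpleGraph V} {e : Sym2 V} {v : V}
    (he : e ∈ G.edgeSet) (hv : v ∈ e) : v ∈ G.support := by
  induction e with
  | h a b =>
    rcases Sym2.mem_iff.mp hv with rfl | rfl
    exacts [(G.mem_edgeSet.mp he).mem_support_left, (G.mem_edgeSet.mp he).mem_support_right]

theorem SimpleGraph.mk_notMem_edgeSet_of_notMem_support {G : SimpleGraph V} {v : V}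
    (hv : v ∉ G.support) (w : V) : s(v, w) ∉ G.edgeSet := fun h =>
  hv (G.mem_support_of_mem_edgeSet h (Sym2.mem_mk_left v w))

theorem oddVertices_subset_support {G : SimpleGraph V} {D : Set (Sym2 V)}
    (hD : D ⊆ G.edgeSet) : oddVertices D ⊆ G.support := fun _ hv =>
  have ⟨_, he, hve⟩ := exists_mem_of_mem_oddVertices hv
  G.mem_support_of_mem_edgeSet (hD he) hve

theorem IsJoin.symmDiff [Finite V] {G : SimpleGraph V} {T₁ T₂ : Set V} {F₁ F₂ : Set (Sym2 V)}
    (h₁ : IsJoin G T₁ F₁) (h₂ : IsJoin G T₂ F₂) : IsJoin G (T₁ ∆ T₂) (F₁ ∆ F₂) := by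
  rw [isJoin_iff] at *
  exact ⟨Set.symmDiff_subset_union.trans (Set.union_subset h₁.1 h₂.1),
    by rw [oddVertices_symmDiff (Set.toFinite _) (Set.toFinite _), h₁.2, h₂.2]⟩

theorem even_ncard_oddVertices [Finite V] {G : SimpleGraph V} {D : Set (Sym2 V)}
    (hD : D ⊆ G.edgeSet) : Even (oddVertices D).ncard := by
  have := Fintype.ofFinite V
  set H := SimpleGraph.fromEdgeSet D
  have hH : H.edgeSet = D := by
    rw [SimpleGraph.edgeSet_fromEdgeSet, sdiff_eq_left]
    exact Set.disjoint_left.mpr fun e he => G.not_isDiag_of_mem_edgeSet (hD he)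
  have hodd : oddVertices D = ↑({v | Odd (H.degree v)} : Finset V) := by
    ext v
    rw [Finset.coe_filter, Set.mem_ofPred_eq, ← SimpleGraph.card_incidenceSet_eq_degree,
      ← Nat.card_eq_fintype_card, Nat.card_coe_set_eq, SimpleGraph.incidenceSet, hH]
    simp [oddVertices]
  rw [hodd, Set.ncard_coe_finset]
  exact H.even_card_odd_degree_vertices

theorem exists_path_of_mem_oddVertices [Finite V] {G : SimpleGraph V} {D : Set (Sym2 V)}
    (hD : D ⊆ G.edgeSet) {u : V} (hu : u ∈ oddVertices D) :
    ∃ y ∈ oddVertices D, y ≠ u ∧ ∃ p : G.Walk u y, p.IsPath ∧ ∀ e ∈ p.edges, e ∈ D := by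
  set K : Set V := {w | ∃ p : G.Walk u w, ∀ e ∈ p.edges, e ∈ D}
  have hK : ∀ {w z}, w ∈ K → s(w, z) ∈ D → z ∈ K := by
    rintro w z ⟨p, hp⟩ hwz
    refine ⟨p.concat (G.mem_edgeSet.mp (hD hwz)), fun e he => ?_⟩
    have : e ∈ p.edges ∨ e = s(w, z) := by simpa using he
    rcases this with he | rfl
    exacts [hp e he, hwz]
  -- the handshake lemma, applied to the part `DK` of `D` inside the `D`-component `K` of `u`,
  -- yields a second odd vertex in `K`
  set DK : Set (Sym2 V) := {e ∈ D | ∀ w ∈ e, w ∈ K}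
  have hDK : oddVertices DK = oddVertices D ∩ K := by
    ext w
    by_cases hw : w ∈ K
    · have : {e ∈ DK | w ∈ e} = {e ∈ D | w ∈ e} := by
        ext e
        refine ⟨fun h => ⟨h.1.1, h.2⟩, fun ⟨he, hwe⟩ => ⟨⟨he, fun z hz => ?_⟩, hwe⟩⟩
        obtain ⟨w', rfl⟩ := Sym2.mem_iff_exists.mp hwe
        rcases Sym2.mem_iff.mp hz with rfl | rfl
        exacts [hw, hK hw he]
      simp [oddVertices, this, hw]
    · have : {e ∈ DK | w ∈ e} = ∅ :=
        Set.eq_empty_of_forall_notMem fun e ⟨he, hwe⟩ => hw (he.2 w hwe)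
      simp [oddVertices, this, hw]
  have huDK : u ∈ oddVertices DK := hDK ▸ ⟨hu, .nil, by simp⟩
  have hcard : 1 < (oddVertices DK).ncard := by
    obtain ⟨k, hk⟩ := even_ncard_oddVertices (D := DK) fun e he => hD he.1
    have := (Set.ncard_pos (Set.toFinite _)).mpr ⟨u, huDK⟩
    omega
  obtain ⟨y, hy, hyu⟩ := Set.exists_ne_of_one_lt_ncard hcard u
  rw [hDK] at hy
  obtain ⟨p, hp⟩ := hy.2
  exact ⟨y, hy.1, hyu, p.bypass, p.bypass_isPath,
    fun e he => hp e (p.edges_bypass_subset_edges he)⟩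

noncomputable def setWeight (F D : Set (Sym2 V)) : ℤ :=
  (D \ F).ncard - (D ∩ F).ncard

theorem setWeight_union [Finite V] {F A B : Set (Sym2 V)} (h : Disjoint A B) :
    setWeight F (A ∪ B) = setWeight F A + setWeight F B := by
  rw [setWeight, setWeight, setWeight, Set.union_sdiff_distrib, Set.union_inter_distrib_right,
    Set.ncard_union_eq (h.mono Set.sdiff_subset Set.sdiff_subset),
    Set.ncard_union_eq (h.mono Set.inter_subset_left Set.inter_subset_left)]
  push_cast
  ring

theorem ncard_symmDiff_eq_add_setWeight [Finite V] (F D : Set (Sym2 V)) :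
    ((F ∆ D).ncard : ℤ) = F.ncard + setWeight F D := by
  rw [setWeight, Set.symmDiff_def, Set.ncard_union_eq disjoint_sdiff_sdiff,
    ← Set.ncard_inter_add_ncard_sdiff_eq_ncard F D, Set.inter_comm D F]
  push_cast
  ring

theorem List.Nodup.ncard_sep {α : Type*} {l : List α} (hl : l.Nodup) (P : α → Prop)
    [DecidablePred P] : {a | a ∈ l ∧ P a}.ncard = (l.filter (P ·)).length := by
  rw [← List.toFinset_card_of_nodup (hl.filter _), ← Set.ncard_coe_finset]
  congr
  ext
  simp

theorem walkWeight_eq_setWeight {G : SimpleGraph V} (F : Set (Sym2 V)) {x y : V}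
    {p : G.Walk x y} (hp : p.IsTrail) : walkWeight F p = setWeight F {e | e ∈ p.edges} := by
  rw [walkWeight, setWeight, ← hp.edges_nodup.ncard_sep, ← hp.edges_nodup.ncard_sep]
  rfl

theorem neg_length_le_walkWeight {G : SimpleGraph V} (F : Set (Sym2 V)) {x y : V}
    (p : G.Walk x y) : -(p.length : ℤ) ≤ walkWeight F p := by
  have := List.length_filter_le (fun e => decide (e ∈ F)) p.edges
  rw [walkWeight, SimpleGraph.Walk.length_edges] at *
  omega

theorem distF_le_walkWeight [Fintype V] {G : SimpleGraph V} (F : Set (Sym2 V)) {x y : V}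
    {p : G.Walk x y} (hp : p.IsPath) : distF G F x y ≤ walkWeight F p := by
  refine csInf_le ⟨-(Fintype.card V : ℤ), ?_⟩ ⟨p, hp, rfl⟩
  rintro w ⟨q, hq, rfl⟩
  have := hq.length_lt
  have := neg_length_le_walkWeight F q
  omega

theorem setWeight_nonneg_of_isJoin [Fintype V] {G : SimpleGraph V} {T X S : Set V}
    {F₀ D : Set (Sym2 V)} (hF₀ : IsMinJoin G T F₀) (hX : IsExtremeSet G F₀ X) (hSX : S ⊆ X)
    (hD : IsJoin G S D) : 0 ≤ setWeight F₀ D := by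
  induction hn : D.ncard using Nat.strong_induction_on generalizing S D with
  | _ n ih =>
    obtain rfl | ⟨u, hu⟩ := S.eq_empty_or_nonempty
    · have hjoin : IsJoin G T (F₀ ∆ D) := by
        have := hF₀.1.symmDiff hD
        rwa [← Set.bot_eq_empty, symmDiff_bot] at this
      have := hF₀.2 _ hjoin
      have := ncard_symmDiff_eq_add_setWeight F₀ D
      omega
    obtain ⟨hDG, hDS⟩ := isJoin_iff.mp hD
    obtain ⟨y, hy, hyu, p, hp, hpD⟩ := exists_path_of_mem_oddVertices hDG (hDS ▸ hu)
    rw [hDS] at hy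
    set P : Set (Sym2 V) := {e | e ∈ p.edges}
    have hPD : P ⊆ D := hpD
    have hP : 0 ≤ setWeight F₀ P :=
      walkWeight_eq_setWeight F₀ hp.isTrail ▸ (hX u (hSX hu) y (hSX hy)).trans
        (distF_le_walkWeight F₀ hp)
    have hPne : P.Nonempty :=
      List.exists_mem_of_ne_nil _ (SimpleGraph.Walk.edges_eq_nil.not.mpr
        (SimpleGraph.Walk.not_nil_of_ne hyu.symm))
    have hrest : IsJoin G ({u} ∆ {y} ∆ S) (D \ P) := by
      rw [← symmDiff_of_le hPD]
      exact (isJoin_iff.mpr ⟨hPD.trans hDG, oddVertices_edges_of_isTrail p hp.isTrail⟩).symmDiff hD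
    have huyS : {u} ∆ {y} ⊆ S :=
      Set.symmDiff_subset_union.trans (Set.union_subset (by simpa using hu) (by simpa using hy))
    have hrestX : {u} ∆ {y} ∆ S ⊆ X :=
      (Set.symmDiff_subset_union.trans (Set.union_subset huyS le_rfl)).trans hSX
    have hlt : (D \ P).ncard < n := hn ▸ Set.ncard_lt_ncard (hPD.sdiff_ssubset_of_nonempty hPne)
    rw [← Set.union_sdiff_cancel hPD, setWeight_union Set.disjoint_sdiff_right]
    have := ih _ hlt hrestX hrest rfl
    omega

theorem IsMinJoin.ncard_le_of_isJoin_symmDiff [Fintype V] {G : SimpleGraph V} {T X S : Set V}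
    {F₀ F : Set (Sym2 V)} (hF₀ : IsMinJoin G T F₀) (hX : IsExtremeSet G F₀ X) (hSX : S ⊆ X)
    (hF : IsJoin G (T ∆ S) F) : F₀.ncard ≤ F.ncard := by
  have hD : IsJoin G S (F₀ ∆ F) := by simpa using hF₀.1.symmDiff hF
  have := setWeight_nonneg_of_isJoin hF₀ hX hSX hD
  have := ncard_symmDiff_eq_add_setWeight F₀ (F₀ ∆ F)
  rw [symmDiff_symmDiff_cancel_left] at this
  omega

theorem mem_oddVertices_image_mk_iff [Finite V] {c v : V} (S : Set V) (hv : v ≠ c) :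
    v ∈ oddVertices ((fun x => s(c, x)) '' S) ↔ v ∈ S := by
  have hinc : {e ∈ (fun x => s(c, x)) '' S | v ∈ e} = (fun x => s(c, x)) '' (S ∩ {v}) := by
    ext e
    simp only [Set.mem_image, Set.mem_inter_iff, Set.mem_singleton_iff, Set.mem_ofPred_eq]
    constructor
    · rintro ⟨⟨x, hx, rfl⟩, hve⟩
      obtain rfl : x = v := ((Sym2.mem_iff.mp hve).resolve_left hv).symm
      exact ⟨x, ⟨hx, rfl⟩, rfl⟩
    · rintro ⟨x, ⟨hx, rfl⟩, rfl⟩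
      exact ⟨⟨x, hx, rfl⟩, Sym2.mem_mk_right _ _⟩
  rw [oddVertices, Set.mem_ofPred_eq, hinc,
    Set.ncard_image_of_injective _ fun x y h => Sym2.congr_right.mp h]
  by_cases hvS : v ∈ S <;> simp [hvS]

section Rootlization

variable {G : SimpleGraph V} {T X : Set V} {r s : V}

theorem le_rootlize : G ≤ rootlize G X r s := fun v w h => by
  simp [rootlize, h, h.ne]

theorem rootlize_adj_root (hrs : r ≠ s) : (rootlize G X r s).Adj r s := by
  simp [rootlize, hrs]

theorem edgeSet_rootlize_subset :
    (rootlize G X r s).edgeSet ⊆ G.edgeSet ∪ insert s(r, s) ((fun x => s(s, x)) '' X) := by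
  intro e he
  induction e with
  | h v w =>
    simp only [rootlize, SimpleGraph.mem_edgeSet, SimpleGraph.fromRel_adj] at he
    rcases he with ⟨-, (h | ⟨rfl, rfl⟩ | ⟨rfl, hw⟩) | (h | ⟨rfl, rfl⟩ | ⟨rfl, hv⟩)⟩
    · exact Or.inl h
    · exact Or.inr (Or.inl rfl)
    · exact Or.inr (Or.inr ⟨w, hw, rfl⟩)
    · exact Or.inl h.symm
    · exact Or.inr (Or.inl Sym2.eq_swap)
    · exact Or.inr (Or.inr ⟨v, hv, Sym2.eq_swap⟩)

theorem IsJoin.union_rootlize [Finite V] {F : Set (Sym2 V)} (hF : IsJoin G T F)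
    (hr : r ∉ G.support ∪ T) (hs : s ∉ G.support ∪ T) (hrs : r ≠ s) :
    IsJoin (rootlize G X r s) (T ∪ {r, s}) (F ∪ {s(r, s)}) := by
  rw [isJoin_iff] at hF ⊢
  simp only [Set.mem_union, not_or] at hr hs
  have hdisj : Disjoint F {s(r, s)} := Set.disjoint_singleton_right.mpr fun h =>
    G.mk_notMem_edgeSet_of_notMem_support hr.1 s (hF.1 h)
  refine ⟨Set.union_subset (hF.1.trans (SimpleGraph.edgeSet_mono le_rootlize))
    (Set.singleton_subset_iff.mpr (rootlize_adj_root hrs)), ?_⟩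
  rw [← Set.symmDiff_eq_union hdisj, oddVertices_symmDiff (Set.toFinite _) (Set.toFinite _),
    oddVertices_singleton hrs, hF.2]
  ext v
  simp only [Set.mem_symmDiff, Set.mem_union, Set.mem_insert_iff, Set.mem_singleton_iff]
  aesop

theorem rootEdge_mem_of_isJoin_rootlize {Fhat : Set (Sym2 V)}
    (hFhat : IsJoin (rootlize G X r s) (T ∪ {r, s}) Fhat)
    (hrG : r ∉ G.support) (hrX : r ∉ X) (hrs : r ≠ s) : s(r, s) ∈ Fhat := by
  obtain ⟨e, he, hre⟩ := exists_mem_of_mem_oddVertices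
    ((isJoin_iff.mp hFhat).2 ▸ (by simp : r ∈ T ∪ {r, s}))
  rcases edgeSet_rootlize_subset (hFhat.1 he) with hG | rfl | ⟨x, hx, rfl⟩
  · exact absurd (G.mem_support_of_mem_edgeSet hG hre) hrG
  · exact he
  · rcases Sym2.mem_iff.mp hre with rfl | rfl
    exacts [absurd rfl hrs, absurd hx hrX]

theorem eq_union_of_subset_edgeSet_rootlize {Fhat : Set (Sym2 V)}
    (hsub : Fhat ⊆ (rootlize G X r s).edgeSet) (hrs : s(r, s) ∈ Fhat) :
    Fhat = Fhat ∩ G.edgeSet ∪ {s(r, s)} ∪ (fun x => s(s, x)) '' {x ∈ X | s(s, x) ∈ Fhat} := by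
  refine subset_antisymm (fun e he => ?_) (Set.union_subset (Set.union_subset
    Set.inter_subset_left (Set.singleton_subset_iff.mpr hrs)) ?_)
  · rcases edgeSet_rootlize_subset (hsub he) with hG | rfl | ⟨x, hx, rfl⟩
    exacts [Or.inl (Or.inl ⟨he, hG⟩), Or.inl (Or.inr rfl), Or.inr ⟨x, ⟨hx, he⟩, rfl⟩]
  · rintro _ ⟨x, hx, rfl⟩
    exact hx.2

theorem exists_eq_union_of_isJoin_rootlize [Finite V] {Fhat : Set (Sym2 V)}
    (hFhat : IsJoin (rootlize G X r s) (T ∪ {r, s}) Fhat)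
    (hr : r ∉ G.support ∪ T ∪ X) (hs : s ∉ G.support ∪ T ∪ X) (hrs : r ≠ s) :
    ∃ S ⊆ X, ∃ F, IsJoin G (T ∆ S) F ∧ Fhat = F ∪ {s(r, s)} ∪ (fun x => s(s, x)) '' S ∧
      Fhat.ncard = F.ncard + 1 + S.ncard := by
  simp only [Set.mem_union, not_or] at hr hs
  have hsplit := eq_union_of_subset_edgeSet_rootlize hFhat.1
    (rootEdge_mem_of_isJoin_rootlize hFhat hr.1.1 hr.2 hrs)
  set S := {x ∈ X | s(s, x) ∈ Fhat}
  set F := Fhat ∩ G.edgeSet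
  have hF : ∀ e ∈ F, r ∉ e ∧ s ∉ e := fun e he =>
    ⟨fun h => hr.1.1 (G.mem_support_of_mem_edgeSet he.2 h),
      fun h => hs.1.1 (G.mem_support_of_mem_edgeSet he.2 h)⟩
  have hFr : Disjoint F {s(r, s)} :=
    Set.disjoint_singleton_right.mpr fun h => (hF _ h).1 (Sym2.mem_mk_left r s)
  have hFrS : Disjoint (F ∪ {s(r, s)}) ((fun x => s(s, x)) '' S) := by
    refine Set.disjoint_union_left.mpr ⟨Set.disjoint_left.mpr ?_, Set.disjoint_left.mpr ?_⟩
    · rintro e he ⟨x, -, rfl⟩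
      exact (hF _ he).2 (Sym2.mem_mk_left s x)
    · rintro e rfl ⟨x, hx, hxe⟩
      rcases Sym2.eq_iff.mp hxe with ⟨rfl, -⟩ | ⟨-, rfl⟩
      exacts [hrs rfl, hr.2 hx.1]
  refine ⟨S, fun x hx => hx.1, F, isJoin_iff.mpr ⟨Set.inter_subset_right, ?_⟩, hsplit, ?_⟩
  · have hodd := (isJoin_iff.mp hFhat).2
    rw [hsplit, ← Set.symmDiff_eq_union hFrS, ← Set.symmDiff_eq_union hFr,
      oddVertices_symmDiff (Set.toFinite _) (Set.toFinite _),
      oddVertices_symmDiff (Set.toFinite _) (Set.toFinite _), oddVertices_singleton hrs] at hodd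
    ext v
    by_cases hv : v = r ∨ v = s
    · have hvF : v ∉ oddVertices F := fun h => by
        rcases hv with rfl | rfl
        exacts [hr.1.1 (oddVertices_subset_support Set.inter_subset_right h),
          hs.1.1 (oddVertices_subset_support Set.inter_subset_right h)]
      rcases hv with rfl | rfl <;> simp [Set.mem_symmDiff, hvF, hr, hs, S]
    · obtain ⟨hvr, hvs⟩ := not_or.mp hv
      have := Set.ext_iff.mp hodd v
      simp only [Set.mem_symmDiff, Set.mem_singleton_iff, Set.mem_union, Set.mem_insert_iff,
        mem_oddVertices_image_mk_iff S hvs, hvr, hvs] at this ⊢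
      tauto
  · rw [hsplit, Set.ncard_union_eq hFrS, Set.ncard_union_eq hFr, Set.ncard_singleton,
      Set.ncard_image_of_injective _ fun x y h => Sym2.congr_right.mp h]

end Rootlization

theorem stmt_12_general [Fintype V] (G : SimpleGraph V) (Vg T X : Set V)
    (F₀ : Set (Sym2 V)) (r s : V)
    (hGV : ∀ v w : V, G.Adj v w → v ∈ Vg ∧ w ∈ Vg)
    (hT : T ⊆ Vg)
    (hF₀ : IsMinJoin G T F₀) (hXV : X ⊆ Vg) (hext : IsExtremeSet G F₀ X)
    (hr : r ∉ Vg) (hs : s ∉ Vg) (hrs : r ≠ s) :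
    ∀ Fhat : Set (Sym2 V),
      IsMinJoin (rootlize G X r s) (T ∪ {r, s}) Fhat ↔
        ∃ F : Set (Sym2 V), IsMinJoin G T F ∧ Fhat = F ∪ {s(r, s)} := by
  have hV : G.support ∪ T ∪ X ⊆ Vg :=
    Set.union_subset (Set.union_subset (fun v ⟨w, h⟩ => (hGV v w h).1) hT) hXV
  have hr' : r ∉ G.support ∪ T ∪ X := (hr <| hV ·)
  have hs' : s ∉ G.support ∪ T ∪ X := (hs <| hV ·)
  have hlift : ∀ F, IsJoin G T F → IsJoin (rootlize G X r s) (T ∪ {r, s}) (F ∪ {s(r, s)}) ∧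
      (F ∪ {s(r, s)}).ncard = F.ncard + 1 := fun F hF =>
    ⟨hF.union_rootlize (hr' <| .inl ·) (hs' <| .inl ·) hrs, by
      rw [Set.union_singleton, Set.ncard_insert_of_notMem fun h =>
        G.mk_notMem_edgeSet_of_notMem_support (hr' <| .inl <| .inl ·) s (hF.1 h)]⟩
  intro Fhat
  constructor
  · rintro ⟨hFhat, hmin⟩
    obtain ⟨S, hSX, F, hF, rfl, hcard⟩ := exists_eq_union_of_isJoin_rootlize hFhat hr' hs' hrs
    have := hF₀.ncard_le_of_isJoin_symmDiff hext hSX hF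
    have := (hlift F₀ hF₀.1).2 ▸ hmin _ (hlift F₀ hF₀.1).1
    obtain rfl : S = ∅ := (Set.ncard_eq_zero (Set.toFinite _)).mp (by omega)
    rw [← Set.bot_eq_empty, symmDiff_bot] at hF
    refine ⟨F, ⟨hF, fun F' hF' => ?_⟩, by simp⟩
    have := hF₀.2 F' hF'
    omega
  · rintro ⟨F, hF, rfl⟩
    refine ⟨(hlift F hF.1).1, fun F' hF' => ?_⟩
    obtain ⟨S, hSX, Fg, hFg, -, hcard⟩ := exists_eq_union_of_isJoin_rootlize hF' hr' hs' hrs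
    have := hF₀.ncard_le_of_isJoin_symmDiff hext hSX hFg
    have := hF.2 F₀ hF₀.1
    rw [(hlift F hF.1).2]
    omega

/-- for the rootlization `(Ĝ, T̂)` of `(G, T)` by an extreme mount `X`,
root `r` and attachment `s`, a set `F̂` of edges is a minimum join of `(Ĝ, T̂)` iff
`F̂ = F ∪ {rs}` for some minimum join `F` of `(G, T)`. -/
theorem stmt_12 [Fintype V] (G : SimpleGraph V) (Vg T X : Set V)
    (F₀ : Set (Sym2 V)) (r s : V)
    (hGV : ∀ v w : V, G.Adj v w → v ∈ Vg ∧ w ∈ Vg)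
    (hT : T ⊆ Vg) (hGT : IsGraft G T)
    (hF₀ : IsMinJoin G T F₀) (hXV : X ⊆ Vg) (hext : IsExtremeSet G F₀ X)
    (hr : r ∉ Vg) (hs : s ∉ Vg) (hrs : r ≠ s) :
    ∀ Fhat : Set (Sym2 V),
      IsMinJoin (rootlize G X r s) (T ∪ {r, s}) Fhat ↔
        ∃ F : Set (Sym2 V), IsMinJoin G T F ∧ Fhat = F ∪ {s(r, s)} :=
  stmt_12_general G Vg T X F₀ r s hGV hT hF₀ hXV hext hr hs hrs
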